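/- arXiv:0712.3580 — 2 statements merged into one kernel-verified Lean document; each statement's English description precedes it below -/
import Mathlib

section
/- The constant γ_n = 2Γ(1+n/2)/(√π Γ((n+1)/2)) satisfies γ_n < √n for every integer n ≥ 2. -/
open Real

lemma gamma_key : ∀ n : ℕ, 2 ≤ n →
    4 * Real.Gamma (1 + (n : ℝ) / 2) ^ 2 < (n : ℝ) * π * Real.Gamma (((n : ℝ) + 1) / 2) ^ 2 := by
  intro n
  induction n using Nat.strong_induction_on with
  | _ n ih =>
    intro hn
    match n with
    | 0 => omega
    | 1 => omega
    | 2 =>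
      have h1 : Real.Gamma (1 + ((2 : ℕ) : ℝ) / 2) = 1 := by
        norm_num [Real.Gamma_two]
      have h2 : Real.Gamma ((((2 : ℕ) : ℝ) + 1) / 2) = Real.sqrt π / 2 := by
        rw [show (((2 : ℕ) : ℝ) + 1) / 2 = 1 / 2 + 1 by norm_num,
          Real.Gamma_add_one (by norm_num), Real.Gamma_one_half_eq]
        ring
      rw [h1, h2]
      have hπ : Real.sqrt π ^ 2 = π := Real.sq_sqrt pi_pos.le
      have h3 : (3 : ℝ) < π := pi_gt_three
      push_cast
      nlinarith [hπ, h3]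
    | 3 =>
      have h2 : Real.Gamma ((((3 : ℕ) : ℝ) + 1) / 2) = 1 := by
        norm_num [Real.Gamma_two]
      have h1 : Real.Gamma (1 + ((3 : ℕ) : ℝ) / 2) = 3 / 4 * Real.sqrt π := by
        rw [show (1 : ℝ) + ((3 : ℕ) : ℝ) / 2 = (1 / 2 + 1) + 1 by norm_num,
          Real.Gamma_add_one (by norm_num), Real.Gamma_add_one (by norm_num),
          Real.Gamma_one_half_eq]
        ring
      rw [h1, h2]
      have hπ : Real.sqrt π ^ 2 = π := Real.sq_sqrt pi_pos.le
      push_cast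
      nlinarith [pi_pos, hπ]
    | (m + 4) =>
      have h := ih (m + 2) (by omega) (by omega)
      push_cast at h ⊢
      have hA : Real.Gamma (1 + ((m : ℝ) + 4) / 2)
          = (1 + ((m : ℝ) + 2) / 2) * Real.Gamma (1 + ((m : ℝ) + 2) / 2) := by
        rw [show (1 : ℝ) + ((m : ℝ) + 4) / 2 = (1 + ((m : ℝ) + 2) / 2) + 1 by ring,
          Real.Gamma_add_one (by positivity)]
      have hB : Real.Gamma (((m : ℝ) + 4 + 1) / 2)
          = (((m : ℝ) + 2 + 1) / 2) * Real.Gamma (((m : ℝ) + 2 + 1) / 2) := by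
        rw [show ((m : ℝ) + 4 + 1) / 2 = (((m : ℝ) + 2 + 1) / 2) + 1 by ring,
          Real.Gamma_add_one (by positivity)]
      rw [hA, hB]
      have hx : 0 < Real.Gamma (1 + ((m : ℝ) + 2) / 2) := Real.Gamma_pos_of_pos (by positivity)
      have hy : 0 < Real.Gamma (((m : ℝ) + 2 + 1) / 2) := Real.Gamma_pos_of_pos (by positivity)
      have hm : (0 : ℝ) ≤ m := Nat.cast_nonneg m
      nlinarith [mul_lt_mul_of_pos_left h (show (0 : ℝ) < ((m : ℝ) + 4) ^ 2 / 4 by positivity),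
        mul_pos pi_pos (mul_pos hy hy), mul_pos hx hx,
        mul_nonneg (mul_nonneg pi_pos.le (mul_pos hy hy).le) hm]

/-- The constant `γₙ = 2Γ(1+n/2)/(√π Γ((n+1)/2))` satisfies `γₙ < √n` for every
integer `n ≥ 2`. -/
theorem gamma_constant_lt_sqrt (n : ℕ) (hn : 2 ≤ n) :
    2 * Real.Gamma (1 + n / 2) / (Real.sqrt π * Real.Gamma ((n + 1) / 2)) <
      Real.sqrt n := by
  have key := gamma_key n hn
  have hx : 0 < Real.Gamma (1 + (n : ℝ) / 2) := Real.Gamma_pos_of_pos (by positivity)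
  have hy : 0 < Real.Gamma (((n : ℝ) + 1) / 2) := Real.Gamma_pos_of_pos (by positivity)
  have hs : 0 < Real.sqrt π := Real.sqrt_pos.mpr pi_pos
  have hden : 0 < Real.sqrt π * Real.Gamma (((n : ℝ) + 1) / 2) := mul_pos hs hy
  rw [Real.lt_sqrt (by positivity)]
  rw [div_pow, div_lt_iff₀ (by positivity)]
  have hπ : Real.sqrt π ^ 2 = π := Real.sq_sqrt pi_pos.le
  calc (2 * Real.Gamma (1 + (n : ℝ) / 2)) ^ 2
      = 4 * Real.Gamma (1 + (n : ℝ) / 2) ^ 2 := by ring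
    _ < (n : ℝ) * π * Real.Gamma (((n : ℝ) + 1) / 2) ^ 2 := key
    _ = (n : ℝ) * (Real.sqrt π * Real.Gamma (((n : ℝ) + 1) / 2)) ^ 2 := by
        rw [mul_pow, hπ]; ring
end

section
/- Let A be an invertible n×n real matrix that is K-quasiconformal, i.e., |A|^n ≤ K|det A| and |det A| ≤ K l(A)^n, where |A| and l(A) are the maximal and minimal singular values. Then for any n−1 vectors x_1,…,x_{n−1} ∈ ℝ^n: K^{1−n}|A|^{n−1}|x_1 ∧ ⋯ ∧ x_{n−1}| ≤ |Ax_1 ∧ ⋯ ∧ Ax_{n−1}| ≤ |A|^{n−1}|x_1 ∧ ⋯ ∧ x_{n−1}|, where |x_1 ∧ ⋯ ∧ x_{n−1}| denotes the norm of the (n−1)-dimensional cross product (the volume of the parallelepiped spanned). -/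
/-!
Write `f` for the Euclidean operator of `A`. Since `det (rows A x₁, …, A xₙ, A w) = det A · det (rows
x₁, …, xₙ, w)`, the two cross products are related by `⟪c', f w⟫ = det A · ⟪c, w⟫` for all `w`.

Testing this at `w = c` gives `|det A| ‖c‖ ≤ ‖f‖ ‖c'‖`; combined with `‖f‖ⁿ⁺¹ ≤ K |det A|` this is
the lower bound. Testing it at a preimage `w` of `c'` gives `‖c'‖² ≤ |det A| ‖c‖ ‖w‖`, and Hadamard's
inequality in an orthonormal basis whose first vector points along `w` gives
`|det A| ‖w‖ ≤ ‖f w‖ ‖f‖ⁿ = ‖c'‖ ‖f‖ⁿ`, which is the upper bound.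
-/

open Module Matrix WithLp
open scoped RealInnerProductSpace EuclideanSpace

theorem Matrix.det_of_mulVec_rows {m R : Type*} [Fintype m] [DecidableEq m] [CommRing R]
    (A : Matrix m m R) (r : m → m → R) :
    (of fun i => A *ᵥ r i).det = A.det * (of r).det := by
  have : (of fun i => A *ᵥ r i) = of r * Aᵀ := by
    ext i j
    simp [mulVec, dotProduct, mul_apply, mul_comm]
  rw [this, det_mul, det_transpose, mul_comm]

def IsCrossProduct {n : ℕ} (x : Fin n → Fin (n + 1) → ℝ) (c : EuclideanSpace ℝ (Fin (n + 1))) :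
    Prop :=
  ∀ v : EuclideanSpace ℝ (Fin (n + 1)), ⟪c, v⟫ = (of (Fin.snoc x (ofLp v))).det

theorem IsCrossProduct.inner_toEuclideanCLM {n : ℕ} {x : Fin n → Fin (n + 1) → ℝ}
    {c c' : EuclideanSpace ℝ (Fin (n + 1))} (A : Matrix (Fin (n + 1)) (Fin (n + 1)) ℝ)
    (hc : IsCrossProduct x c) (hc' : IsCrossProduct (fun i => A *ᵥ x i) c')
    (w : EuclideanSpace ℝ (Fin (n + 1))) :
    ⟪c', toEuclideanCLM (𝕜 := ℝ) A w⟫ = A.det * ⟪c, w⟫ := by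
  rw [hc', hc, ofLp_toEuclideanCLM, ← det_of_mulVec_rows]
  congr 2
  exact (Fin.comp_snoc _ _ _).symm

section Hadamard

variable {E : Type*} [NormedAddCommGroup E] [InnerProductSpace ℝ E]

theorem OrthonormalBasis.abs_det_le_prod_norm {n : ℕ} [Fact (finrank ℝ E = n)]
    (b : OrthonormalBasis (Fin n) ℝ E) (v : Fin n → E) :
    |b.toBasis.det v| ≤ ∏ i, ‖v i‖ := by
  rw [← b.toBasis.orientation.volumeForm_robust' b v]
  exact b.toBasis.orientation.abs_volumeForm_apply_le v

theorem exists_orthonormalBasis_zero_eq {n : ℕ} [Fact (finrank ℝ E = n + 1)] {u : E}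
    (hu : ‖u‖ = 1) : ∃ b : OrthonormalBasis (Fin (n + 1)) ℝ E, b 0 = u := by
  have : FiniteDimensional ℝ E := .of_fact_finrank_eq_succ n
  have hcard : finrank ℝ E = Fintype.card (Fin (n + 1)) := by simpa using Fact.out
  have hu' : Orthonormal ℝ (({0} : Set (Fin (n + 1))).domRestrict fun _ => u) :=
    ⟨fun _ => hu, fun i j hij => absurd (Subsingleton.elim i j) hij⟩
  obtain ⟨b, hb⟩ := hu'.exists_orthonormalBasis_extension_of_card_eq hcard
  exact ⟨b, hb 0 rfl⟩

theorem ContinuousLinearMap.abs_det_le_norm_apply_mul_opNorm_pow {n : ℕ}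
    [Fact (finrank ℝ E = n + 1)] (f : E →L[ℝ] E) {u : E} (hu : ‖u‖ = 1) :
    |LinearMap.det (f : E →ₗ[ℝ] E)| ≤ ‖f u‖ * ‖f‖ ^ n := by
  obtain ⟨b, rfl⟩ := exists_orthonormalBasis_zero_eq (n := n) hu
  have hdet : LinearMap.det (f : E →ₗ[ℝ] E) = b.toBasis.det (f ∘ b) := by
    have := b.toBasis.det_comp (f : E →ₗ[ℝ] E) b.toBasis
    rwa [Basis.det_self, mul_one, b.coe_toBasis, eq_comm] at this
  calc |LinearMap.det (f : E →ₗ[ℝ] E)| ≤ ∏ i, ‖f (b i)‖ := hdet ▸ b.abs_det_le_prod_norm _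
    _ = ‖f (b 0)‖ * ∏ i : Fin n, ‖f (b i.succ)‖ := Fin.prod_univ_succ _
    _ ≤ ‖f (b 0)‖ * ∏ _i : Fin n, ‖f‖ := by
        gcongr with i
        simpa [b.orthonormal.1 i.succ] using f.le_opNorm (b i.succ)
    _ = ‖f (b 0)‖ * ‖f‖ ^ n := by rw [Finset.prod_const, Finset.card_fin]

theorem ContinuousLinearMap.abs_det_mul_norm_le {n : ℕ} [Fact (finrank ℝ E = n + 1)]
    (f : E →L[ℝ] E) (w : E) :
    |LinearMap.det (f : E →ₗ[ℝ] E)| * ‖w‖ ≤ ‖f w‖ * ‖f‖ ^ n := by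
  rcases eq_or_ne w 0 with rfl | hw
  · simp
  have hu : ‖‖w‖⁻¹ • w‖ = 1 := norm_smul_inv_norm hw
  calc |LinearMap.det (f : E →ₗ[ℝ] E)| * ‖w‖ ≤ ‖f (‖w‖⁻¹ • w)‖ * ‖f‖ ^ n * ‖w‖ := by
        gcongr; exact f.abs_det_le_norm_apply_mul_opNorm_pow hu
    _ = ‖f w‖ * ‖f‖ ^ n := by
        rw [map_smul, norm_smul, norm_inv, norm_norm]
        field_simp

end Hadamard

section InnerRelation

variable {E : Type*} [NormedAddCommGroup E] [InnerProductSpace ℝ E]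
  {f : E →L[ℝ] E} {c c' : E} {d : ℝ}

theorem abs_mul_norm_le_of_inner_apply_eq (h : ∀ w, ⟪c', f w⟫ = d * ⟪c, w⟫) :
    |d| * ‖c‖ ≤ ‖f‖ * ‖c'‖ := by
  rcases eq_or_ne c 0 with rfl | hc
  · simp only [norm_zero, mul_zero]; positivity
  refine le_of_mul_le_mul_right ?_ (norm_pos_iff.mpr hc)
  calc |d| * ‖c‖ * ‖c‖ = |⟪c', f c⟫| := by
        rw [h, abs_mul, real_inner_self_eq_norm_mul_norm, abs_mul_self, mul_assoc]
    _ ≤ ‖c'‖ * ‖f c‖ := abs_real_inner_le_norm _ _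
    _ ≤ ‖c'‖ * (‖f‖ * ‖c‖) := by gcongr; exact f.le_opNorm c
    _ = ‖f‖ * ‖c'‖ * ‖c‖ := by ring

theorem norm_le_mul_norm_of_inner_apply_eq (hf : Function.Surjective f)
    (h : ∀ w, ⟪c', f w⟫ = d * ⟪c, w⟫) {M : ℝ} (hM : 0 ≤ M) (hd : ∀ w, |d| * ‖w‖ ≤ ‖f w‖ * M) :
    ‖c'‖ ≤ M * ‖c‖ := by
  rcases eq_or_ne c' 0 with rfl | hc'
  · simp only [norm_zero]; positivity
  obtain ⟨w, rfl⟩ := hf c'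
  refine le_of_mul_le_mul_right ?_ (norm_pos_iff.mpr hc')
  calc ‖f w‖ * ‖f w‖ = d * ⟪c, w⟫ := by rw [← h, real_inner_self_eq_norm_mul_norm]
    _ ≤ |d| * (‖c‖ * ‖w‖) :=
        (le_abs_self _).trans (by rw [abs_mul]; gcongr; exact abs_real_inner_le_norm _ _)
    _ = ‖c‖ * (|d| * ‖w‖) := by ring
    _ ≤ ‖c‖ * (‖f w‖ * M) := mul_le_mul_of_nonneg_left (hd w) (norm_nonneg c)
    _ = M * ‖c‖ * ‖f w‖ := by ring

theorem opNorm_pow_mul_norm_le_of_inner_apply_eq (h : ∀ w, ⟪c', f w⟫ = d * ⟪c, w⟫) {n : ℕ}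
    (hn : n ≠ 0) {K : ℝ} (hK : 0 ≤ K) (hqc : ‖f‖ ^ (n + 1) ≤ K * |d|) :
    ‖f‖ ^ n * ‖c‖ ≤ K * ‖c'‖ := by
  rcases (norm_nonneg f).eq_or_lt with h0 | hpos
  · rw [← h0, zero_pow hn, zero_mul]; positivity
  refine le_of_mul_le_mul_left ?_ hpos
  calc ‖f‖ * (‖f‖ ^ n * ‖c‖) = ‖f‖ ^ (n + 1) * ‖c‖ := by ring
    _ ≤ K * (|d| * ‖c‖) := by rw [← mul_assoc]; gcongr
    _ ≤ K * (‖f‖ * ‖c'‖) := mul_le_mul_of_nonneg_left (abs_mul_norm_le_of_inner_apply_eq h) hK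
    _ = ‖f‖ * (K * ‖c'‖) := by ring

end InnerRelation

theorem cross_product_distortion_general (n : ℕ) (hn : 1 ≤ n) (K : ℝ) (hK : 1 ≤ K)
    (A : Matrix (Fin (n + 1)) (Fin (n + 1)) ℝ) (hA : IsUnit A.det)
    (hqc1 : ‖Matrix.toEuclideanCLM (𝕜 := ℝ) A‖ ^ (n + 1) ≤ K * |A.det|)
    (x : Fin n → EuclideanSpace ℝ (Fin (n + 1)))
    (c c' : EuclideanSpace ℝ (Fin (n + 1)))
    (hc : ∀ v : EuclideanSpace ℝ (Fin (n + 1)), (inner ℝ c v : ℝ) =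
      (Matrix.of (Fin.snoc (fun i => (x i : Fin (n + 1) → ℝ)) (v : Fin (n + 1) → ℝ))).det)
    (hc' : ∀ v : EuclideanSpace ℝ (Fin (n + 1)), (inner ℝ c' v : ℝ) =
      (Matrix.of (Fin.snoc (fun i => A.mulVec (x i : Fin (n + 1) → ℝ))
        (v : Fin (n + 1) → ℝ))).det) :
    K ^ ((1 : ℝ) - (n + 1)) * ‖Matrix.toEuclideanCLM (𝕜 := ℝ) A‖ ^ n * ‖c‖ ≤ ‖c'‖ ∧
      ‖c'‖ ≤ ‖Matrix.toEuclideanCLM (𝕜 := ℝ) A‖ ^ n * ‖c‖ := by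
  set f := toEuclideanCLM (𝕜 := ℝ) A
  have hdet : LinearMap.det (f : EuclideanSpace ℝ (Fin (n + 1)) →ₗ[ℝ] _) = A.det :=
    LinearMap.det_toLin (EuclideanSpace.basisFun _ ℝ).toBasis A
  have hrel : ∀ w, ⟪c', f w⟫ = A.det * ⟪c, w⟫ :=
    IsCrossProduct.inner_toEuclideanCLM A (x := fun i => ofLp (x i)) hc hc'
  have hK0 : 0 < K := one_pos.trans_le hK
  refine ⟨?_, ?_⟩
  · rw [show (1 : ℝ) - (n + 1) = -(n : ℝ) by ring, Real.rpow_neg hK0.le, Real.rpow_natCast,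
      mul_assoc, inv_mul_le_iff₀ (by positivity)]
    calc ‖f‖ ^ n * ‖c‖ ≤ K * ‖c'‖ :=
          opNorm_pow_mul_norm_le_of_inner_apply_eq hrel (by omega) hK0.le hqc1
      _ ≤ K ^ n * ‖c'‖ := by gcongr; exact le_self_pow₀ hK (by omega)
  · have hf : Function.Surjective f :=
      ((Module.End.isUnit_iff _).mp ((LinearMap.isUnit_iff_isUnit_det _).mpr (hdet ▸ hA))).2
    exact norm_le_mul_norm_of_inner_apply_eq hf hrel (by positivity)
      fun w => hdet ▸ f.abs_det_mul_norm_le w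

/-- Distortion of the generalized cross product by a `K`-quasiconformal linear map
(dimension `n+1`): if `c` is the cross product of `x₁,…,xₙ` and `c'` that of
`Ax₁,…,Axₙ` (characterized by `⟨c,v⟩ = det(x₁,…,xₙ,v)` for all `v`), then
`K^{1−(n+1)}‖A‖ⁿ‖c‖ ≤ ‖c'‖ ≤ ‖A‖ⁿ‖c‖`. -/
theorem cross_product_distortion (n : ℕ) (hn : 1 ≤ n) (K : ℝ) (hK : 1 ≤ K)
    (A : Matrix (Fin (n + 1)) (Fin (n + 1)) ℝ) (hA : IsUnit A.det)
    (l : ℝ)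
    (hl : l = ⨅ ζ : {ζ : EuclideanSpace ℝ (Fin (n + 1)) // ‖ζ‖ = 1},
        ‖(WithLp.equiv 2 (Fin (n + 1) → ℝ)).symm (A.mulVec (ζ : Fin (n + 1) → ℝ))‖)
    (hqc1 : ‖Matrix.toEuclideanCLM (𝕜 := ℝ) A‖ ^ (n + 1) ≤ K * |A.det|)
    (hqc2 : |A.det| ≤ K * l ^ (n + 1))
    (x : Fin n → EuclideanSpace ℝ (Fin (n + 1)))
    (c c' : EuclideanSpace ℝ (Fin (n + 1)))
    (hc : ∀ v : EuclideanSpace ℝ (Fin (n + 1)), (inner ℝ c v : ℝ) =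
      (Matrix.of (Fin.snoc (fun i => (x i : Fin (n + 1) → ℝ)) (v : Fin (n + 1) → ℝ))).det)
    (hc' : ∀ v : EuclideanSpace ℝ (Fin (n + 1)), (inner ℝ c' v : ℝ) =
      (Matrix.of (Fin.snoc (fun i => A.mulVec (x i : Fin (n + 1) → ℝ))
        (v : Fin (n + 1) → ℝ))).det) :
    K ^ ((1 : ℝ) - (n + 1)) * ‖Matrix.toEuclideanCLM (𝕜 := ℝ) A‖ ^ n * ‖c‖ ≤ ‖c'‖ ∧
      ‖c'‖ ≤ ‖Matrix.toEuclideanCLM (𝕜 := ℝ) A‖ ^ n * ‖c‖ :=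
  cross_product_distortion_general n hn K hK A hA hqc1 x c c' hc hc'
end
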